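/- For every f ∈ U(ℝ) there exists a compactification (G(f), θ) of ℝ with G(f) a separable compact abelian group, and a continuous function h : G(f) → ℂ, such that f = h ∘ θ. Explicitly, for nonzero f one may take θ : ℝ → 𝕋^{Ω(f)} defined by θ(x)(ω) := e^{iωx} and G(f) := closure of θ(ℝ) in the product group 𝕋^{Ω(f)}. -/

import Mathlib

open MeasureTheory Filter

noncomputable section

/-- `g` is a trigonometric polynomial: a finite sum `x ↦ ∑ a_ω e^{iωx}`. -/
def IsTrigPoly (g : ℝ → ℂ) : Prop :=
  ∃ (s : Finset ℝ) (a : ℝ → ℂ), ∀ x : ℝ, g x = ∑ ω ∈ s, a ω * Complex.exp (Complex.I * ω * x)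

/-- Bohr's uniformly almost periodic functions: uniform limits of trigonometric polynomials. -/
def IsUAP (f : ℝ → ℂ) : Prop :=
  Continuous f ∧ ∀ ε : ℝ, 0 < ε → ∃ g : ℝ → ℂ, IsTrigPoly g ∧ ∀ x : ℝ, ‖f x - g x‖ ≤ ε

/-! Approximate `f` uniformly by trigonometric polynomials `g n`. Their frequencies form a
countable set `Ω` (used in place of the Bohr spectrum, so no Bohr mean is needed), and each `g n`
is a continuous function of `θ x = (e^{iωx})_{ω ∈ Ω} ∈ 𝕋^Ω`. The closure `G` of `θ(ℝ)` is a compact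
metrizable group, and because `θ(ℝ)` is dense in `G` the continuous extensions of the `g n` to `G`
are still uniformly Cauchy; their uniform limit `h` satisfies `f = h ∘ θ`. -/

section DenseExtension

variable {ι X Y E : Type*} [TopologicalSpace Y] [UniformSpace E] {p : Filter ι}
  {θ : X → Y} {F : ι → Y → E}

theorem DenseRange.uniformCauchySeqOn_univ (hθ : DenseRange θ) (hF : ∀ i, Continuous (F i))
    (hcauchy : UniformCauchySeqOn (fun i => F i ∘ θ) p Set.univ) :
    UniformCauchySeqOn F p Set.univ := by
  intro u hu
  obtain ⟨t, ⟨ht, ht_closed⟩, htu⟩ := uniformity_hasBasis_closed.mem_iff.mp hu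
  filter_upwards [hcauchy t ht] with i hi y _
  refine htu (hθ.induction_on (p := fun y => (F i.1 y, F i.2 y) ∈ t) y ?_ fun x => hi x trivial)
  exact ht_closed.preimage ((hF i.1).prodMk (hF i.2))

theorem DenseRange.exists_continuous_comp_eq_of_tendstoUniformly [CompleteSpace E] [T2Space E]
    [p.NeBot] (hθ : DenseRange θ) (hF : ∀ i, Continuous (F i)) {f : X → E}
    (hf : TendstoUniformly (fun i => F i ∘ θ) f p) :
    ∃ h : Y → E, Continuous h ∧ f = h ∘ θ := by
  have hcauchy : UniformCauchySeqOn F p Set.univ :=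
    hθ.uniformCauchySeqOn_univ hF (tendstoUniformlyOn_univ.mpr hf).uniformCauchySeqOn
  choose h hh using fun y => CompleteSpace.complete (hcauchy.cauchy_map (Set.mem_univ y))
  have hFh : TendstoUniformly F h p :=
    tendstoUniformlyOn_univ.mp (hcauchy.tendstoUniformlyOn_of_tendsto fun y _ => hh y)
  exact ⟨h, hFh.continuous (Frequently.of_forall hF),
    funext fun x => tendsto_nhds_unique (hf.tendsto_at x) (hh (θ x))⟩

end DenseExtension

namespace AddChar

variable {A K : Type*} [AddGroup A] [CommGroup K] [TopologicalSpace K] [IsTopologicalGroup K]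

def rangeClosure (ψ : AddChar A K) : Subgroup K :=
  (toMonoidHom ψ).range.topologicalClosure

def toRangeClosure (ψ : AddChar A K) : AddChar A ψ.rangeClosure where
  toFun x := ⟨ψ x, Subgroup.le_topologicalClosure _ ⟨Multiplicative.ofAdd x, rfl⟩⟩
  map_zero_eq_one' := Subtype.ext ψ.map_zero_eq_one
  map_add_eq_mul' x y := Subtype.ext (ψ.map_add_eq_mul x y)

variable (ψ : AddChar A K)

instance [CompactSpace K] : CompactSpace ψ.rangeClosure :=
  isCompact_iff_compactSpace.mp (Subgroup.isClosed_topologicalClosure _).isCompact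

instance [SecondCountableTopology K] : SecondCountableTopology ψ.rangeClosure :=
  Topology.IsInducing.subtypeVal.secondCountableTopology

theorem denseRange_toRangeClosure : DenseRange ψ.toRangeClosure := by
  intro z
  rw [closure_subtype, ← Set.range_comp]
  exact z.2

theorem continuous_toRangeClosure [TopologicalSpace A] (hψ : Continuous ψ) :
    Continuous ψ.toRangeClosure :=
  hψ.subtype_mk _

end AddChar

def expChar (Ω : Set ℝ) : AddChar ℝ (Ω → Circle) where
  toFun x ω := Real.probChar (ω * x)
  map_zero_eq_one' := by ext; simp
  map_add_eq_mul' x y := by ext; simp [mul_add, AddChar.map_add_eq_mul]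

theorem continuous_expChar (Ω : Set ℝ) : Continuous (expChar Ω) :=
  continuous_pi fun _ => Real.continuous_probChar.comp (continuous_const_mul _)

theorem exists_continuous_trigSum_eq_comp_expChar {Ω : Set ℝ} {s : Finset ℝ} (hs : ↑s ⊆ Ω)
    (a : ℝ → ℂ) : ∃ P : C(Ω → Circle, ℂ),
      ∀ x : ℝ, ∑ ω ∈ s, a ω * Complex.exp (Complex.I * ω * x) = P (expChar Ω x) := by
  classical
  refine ⟨⟨fun z => ∑ ω ∈ s.subtype (· ∈ Ω), a ω * z ω, by fun_prop⟩, fun x => ?_⟩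
  rw [ContinuousMap.coe_mk, ← Finset.sum_subtype_of_mem _ hs]
  refine Finset.sum_congr rfl fun ω _ => ?_
  rw [expChar, AddChar.coe_mk, Real.probChar_apply]
  push_cast
  ring_nf

theorem IsUAP.exists_tendstoUniformly_isTrigPoly {f : ℝ → ℂ} (hf : IsUAP f) :
    ∃ g : ℕ → ℝ → ℂ, (∀ n, IsTrigPoly (g n)) ∧ TendstoUniformly g f atTop := by
  choose g hg hfg using fun n : ℕ => hf.2 (1 / (n + 1)) Nat.one_div_pos_of_nat
  refine ⟨g, hg, Metric.tendstoUniformly_iff.mpr fun ε hε => ?_⟩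
  obtain ⟨N, hN⟩ := exists_nat_one_div_lt hε
  filter_upwards [eventually_ge_atTop N] with n hn x
  calc dist (f x) (g n x) ≤ 1 / (n + 1) := (dist_eq_norm _ _).trans_le (hfg n x)
    _ ≤ 1 / (N + 1) := Nat.one_div_le_one_div hn
    _ < ε := hN

theorem IsUAP.exists_tendstoUniformly_comp_expChar {f : ℝ → ℂ} (hf : IsUAP f) :
    ∃ Ω : Set ℝ, Ω.Countable ∧ ∃ F : ℕ → C(Ω → Circle, ℂ),
      TendstoUniformly (fun n => F n ∘ expChar Ω) f atTop := by
  obtain ⟨g, hg, hgf⟩ := hf.exists_tendstoUniformly_isTrigPoly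
  choose s a hsa using hg
  have hs (n : ℕ) : ↑(s n) ⊆ ⋃ m, (s m : Set ℝ) := Set.subset_iUnion (fun m => (s m : Set ℝ)) n
  choose F hF using fun n => exists_continuous_trigSum_eq_comp_expChar (hs n) (a n)
  refine ⟨_, Set.countable_iUnion fun n => (s n).countable_toSet, F, ?_⟩
  convert hgf using 2 with n
  exact funext fun x => ((hsa n x).trans (hF n x)).symm

/-- Every `f ∈ U(ℝ)` factors through a compactification `(G(f), θ)` of `ℝ` with `G(f)` a
separable compact abelian (topological) group: there is a continuous homomorphism
`θ : ℝ → G(f)` with dense image and a continuous `h : G(f) → ℂ` with `f = h ∘ θ`. -/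
theorem exists_separable_compactification
    (f : ℝ → ℂ) (hf : IsUAP f) :
    ∃ (G : Type) (ts : TopologicalSpace G) (gr : CommGroup G),
      @IsTopologicalGroup G ts gr.toGroup ∧
      @CompactSpace G ts ∧
      @TopologicalSpace.SeparableSpace G ts ∧
      ∃ θ : ℝ → G,
        (∀ x y : ℝ, θ (x + y) = θ x * θ y) ∧
        @Continuous ℝ G _ ts θ ∧
        @DenseRange G ts ℝ θ ∧
        ∃ h : G → ℂ, @Continuous G ℂ ts _ h ∧ f = h ∘ θ := by
  obtain ⟨Ω, hΩ, F, hF⟩ := hf.exists_tendstoUniformly_comp_expChar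
  have : Countable Ω := hΩ.to_subtype
  set ψ := expChar Ω
  obtain ⟨h, hh, rfl⟩ := ψ.denseRange_toRangeClosure.exists_continuous_comp_eq_of_tendstoUniformly
    (θ := ψ.toRangeClosure) (F := fun n z => F n z)
    (fun n => (F n).continuous.comp continuous_subtype_val) hF
  exact ⟨ψ.rangeClosure, inferInstance, inferInstance, inferInstance, inferInstance, inferInstance,
    ψ.toRangeClosure, ψ.toRangeClosure.map_add_eq_mul, ψ.continuous_toRangeClosure
    (continuous_expChar Ω), ψ.denseRange_toRangeClosure, h, hh, rfl⟩

end
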